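/- Let G be a group and g ∈ G a right Engel element (for every x ∈ G there is n with [g, x, x, …, x] = 1, n copies of x). Then g⁻¹ is a left Engel element of G. -/

import Mathlib

/-!
Put `y = x g⁻¹ x⁻¹` and `d = g x⁻¹`. Conjugation by `d` sends `y` to `g⁻¹` and `g` to `g * [x, g⁻¹]`,
and left multiplication by `g` does not change a commutator with `g⁻¹`. Hence
`[x, g⁻¹, …, g⁻¹]` (`n + 1` entries `g⁻¹`) is the `d`-conjugate of `[g, y, …, y]` (`n` entries `y`),
which vanishes for a suitable `n ≥ 1` because `g` is right Engel.
-/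

/-- Iterated commutator `[x, g, ..., g]` (with `n` copies of `g`), where
`[x,g] = x⁻¹g⁻¹xg`, `engel x g 0 = x`. -/
def engel {G : Type*} [Group G] (x g : G) : ℕ → G
  | 0 => x
  | n + 1 => (engel x g n)⁻¹ * g⁻¹ * engel x g n * g

section Engel

variable {G H : Type*} [Group G] [Group H]

lemma engel_add (a b : G) (m n : ℕ) : engel a b (m + n) = engel (engel a b m) b n := by
  induction n with
  | zero => rfl
  | succ n ih => rw [← add_assoc, engel, ih, engel]

lemma map_engel {F : Type*} [FunLike F G H] [MonoidHomClass F G H] (f : F) (a b : G) (n : ℕ) :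
    f (engel a b n) = engel (f a) (f b) n := by
  induction n with
  | zero => rfl
  | succ n ih => simp only [engel, map_mul, map_inv, ih]

lemma engel_mul_left_of_commute {a b c : G} (h : Commute c b) {n : ℕ} (hn : n ≠ 0) :
    engel (c * a) b n = engel a b n := by
  obtain ⟨k, rfl⟩ := Nat.exists_eq_add_of_lt (Nat.pos_of_ne_zero hn)
  have hone : engel (c * a) b 1 = engel a b 1 := by
    simp only [engel, mul_inv_rev, mul_assoc]
    rw [← mul_assoc b⁻¹ c, ← h.inv_right.eq, mul_assoc, inv_mul_cancel_left]
  rw [zero_add, add_comm, engel_add, hone, ← engel_add]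

end Engel

theorem stmt_14 {G : Type*} [Group G] (g : G)
    (hre : ∀ x : G, ∃ n, 1 ≤ n ∧ engel g x n = 1) :
    ∀ x : G, ∃ n, 1 ≤ n ∧ engel x g⁻¹ n = 1 := by
  intro x
  obtain ⟨n, hn, hy⟩ := hre (x * g⁻¹ * x⁻¹)
  refine ⟨n + 1, by omega, ?_⟩
  calc engel x g⁻¹ (n + 1)
      = engel (g * engel x g⁻¹ 1) g⁻¹ n := by
        rw [engel_mul_left_of_commute (Commute.refl g).inv_right (by omega), add_comm,
          engel_add]
    _ = engel (MulAut.conj (g * x⁻¹) g) (MulAut.conj (g * x⁻¹) (x * g⁻¹ * x⁻¹)) n := by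
        congr 1
        · simp only [engel, MulAut.conj_apply]; group
        · simp only [MulAut.conj_apply]; group
    _ = 1 := by rw [← map_engel, hy, map_one]
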